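/- For every v ∈ V with v ≠ 0, the averaged logarithmic growth rate (1/i) · log‖A_i v‖ converges as i → ∞ to d(v) := lim_{i→∞}(log‖A_{i+1}v‖ − log‖A_i v‖), which is an eigenvalue of Λ. -/

import Mathlib

open Filter Topology

/-!
In an orthonormal eigenbasis of `Λ` the map `exp Λ` is diagonal with entries `exp μ_l`, and
`y_i = A_i v` satisfies `y_{i+1} = exp Λ y_i + r_i` with `‖r_i‖ = o(‖y_i‖)`. Let `s` be the largest
eigenvalue whose upper spectral part `{μ ≥ s}` does not carry an asymptotically negligible share of
the norm of `y_i`. The part above `s` is negligible by maximality. The part below `s` is negligible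
by a growth-gap argument: once the upper part holds a fixed share of the norm it grows by a factor
close to `exp s` per step, the lower part by at most `exp s' < exp s`, so their ratio contracts to
zero. Hence `y_i` concentrates on the `s`-eigenspace, `‖y_{i+1}‖ / ‖y_i‖ → exp s`, and the
averaged growth rate follows from the increments by Cesàro.
-/

theorem tendsto_zero_of_le_mul_add {θ : ℝ} (hθ0 : 0 ≤ θ) (hθ1 : θ < 1) {u v : ℕ → ℝ}
    (hu : ∀ m, 0 ≤ u m) (hv : Tendsto v atTop (𝓝 0)) (hrec : ∀ m, u (m + 1) ≤ θ * u m + v m) :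
    Tendsto u atTop (𝓝 0) := by
  refine tendsto_order.2 ⟨fun a ha => .of_forall fun m => ha.trans_le (hu m), fun ρ hρ => ?_⟩
  obtain ⟨N, hN⟩ := eventually_atTop.1 ((tendsto_order.1 hv).2 ((1 - θ) * ρ / 2) (by nlinarith))
  have hbound : ∀ j, u (N + j) ≤ θ ^ j * u N + ρ / 2 := by
    intro j
    induction j with
    | zero => simp; linarith
    | succ j ih =>
      calc u (N + (j + 1)) ≤ θ * u (N + j) + v (N + j) := hrec (N + j)
        _ ≤ θ * (θ ^ j * u N + ρ / 2) + (1 - θ) * ρ / 2 := by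
          gcongr; exact (hN _ (Nat.le_add_right N j)).le
        _ = θ ^ (j + 1) * u N + ρ / 2 := by ring
  have hpow : Tendsto (fun j => θ ^ j * u N) atTop (𝓝 0) := by
    simpa using (tendsto_pow_atTop_nhds_zero_of_lt_one hθ0 hθ1).mul_const (u N)
  obtain ⟨J, hJ⟩ := eventually_atTop.1 ((tendsto_order.1 hpow).2 _ (half_pos hρ))
  refine eventually_atTop.2 ⟨N + J, fun m hm => ?_⟩
  obtain ⟨j, rfl⟩ := Nat.exists_eq_add_of_le (le_trans (Nat.le_add_right N J) hm)
  linarith [hbound j, hJ j (by omega)]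

theorem tendsto_inv_mul_of_tendsto_sub {f : ℕ → ℝ} {c : ℝ}
    (h : Tendsto (fun i => f (i + 1) - f i) atTop (𝓝 c)) :
    Tendsto (fun i : ℕ => (i : ℝ)⁻¹ * f i) atTop (𝓝 c) := by
  have hmean := h.cesaro
  simp only [Finset.sum_range_sub] at hmean
  have h0 : Tendsto (fun n : ℕ => (n : ℝ)⁻¹ * f 0) atTop (𝓝 0) := by
    simpa using tendsto_inv_atTop_nhds_zero_nat.mul_const (f 0)
  simpa [mul_sub] using hmean.add h0

theorem NormedSpace.exp_apply_of_apply_eq_smul {𝕜 V : Type*} [RCLike 𝕜] [NormedAddCommGroup V]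
    [NormedSpace 𝕜 V] [CompleteSpace V] {Λ : V →L[𝕜] V} {u : V} {c : 𝕜} (h : Λ u = c • u) :
    NormedSpace.exp Λ u = NormedSpace.exp c • u := by
  have hpow : ∀ n : ℕ, (Λ ^ n) u = c ^ n • u := by
    intro n
    induction n with
    | zero => simp
    | succ n ih => rw [pow_succ', mul_apply_eq_comp, ih, map_smul, h, smul_smul, pow_succ]
  have hΛ := (NormedSpace.exp_series_hasSum_exp' (𝕂 := 𝕜) Λ).mapL (ContinuousLinearMap.apply 𝕜 V u)
  have hc := (NormedSpace.exp_series_hasSum_exp' (𝕂 := 𝕜) c).smul_const u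
  refine hΛ.unique ?_
  convert hc using 2 with n
  simp [hpow, smul_smul]

theorem tendsto_div_zero_of_growth_gap {a a' b Q : ℝ} (hb : 0 ≤ b) (hba' : b < a') (hQ : 1 ≤ Q)
    {T R N ε : ℕ → ℝ} (hR : ∀ i, 0 ≤ R i) (hTN : ∀ i, T i ≤ N i) (hNTR : ∀ i, N i ≤ T i + R i)
    (hε0 : ∀ i, 0 ≤ ε i) (hε : Tendsto ε atTop (𝓝 0))
    (hεa : ∀ i, ε i * (1 + Q) ≤ a - a') (hεb : ∀ i, ε i * (1 + Q) ≤ a' - b)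
    (hTsucc : ∀ i, a * T i - ε i * N i ≤ T (i + 1))
    (hRsucc : ∀ i, R (i + 1) ≤ b * R i + ε i * N i)
    (hT0 : 0 < T 0) (hR0 : R 0 ≤ Q * T 0) :
    Tendsto (fun i => R i / N i) atTop (𝓝 0) := by
  have ha' : 0 < a' := hb.trans_lt hba'
  have hstep : ∀ i, 0 < T i → R i ≤ Q * T i →
      a' * T i ≤ T (i + 1) ∧ R (i + 1) ≤ b * R i + ε i * (1 + Q) * T i := by
    intro i hTi hRi
    have hεN : ε i * N i ≤ ε i * (1 + Q) * T i := by
      calc ε i * N i ≤ ε i * (T i + Q * T i) :=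
            mul_le_mul_of_nonneg_left ((hNTR i).trans (by linarith)) (hε0 i)
        _ = ε i * (1 + Q) * T i := by ring
    have hεT : ε i * (1 + Q) * T i ≤ (a - a') * T i := mul_le_mul_of_nonneg_right (hεa i) hTi.le
    exact ⟨by linarith [hTsucc i], by linarith [hRsucc i]⟩
  have hinv : ∀ i, 0 < T i ∧ R i ≤ Q * T i := by
    intro i
    induction i with
    | zero => exact ⟨hT0, hR0⟩
    | succ i ih =>
      obtain ⟨hgrow, hRle⟩ := hstep i ih.1 ih.2
      refine ⟨(mul_pos ha' ih.1).trans_le hgrow, ?_⟩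
      calc R (i + 1) ≤ b * R i + ε i * (1 + Q) * T i := hRle
        _ ≤ b * (Q * T i) + (a' - b) * Q * T i :=
          add_le_add (mul_le_mul_of_nonneg_left ih.2 hb) (mul_le_mul_of_nonneg_right
            ((hεb i).trans (le_mul_of_one_le_right (by linarith) hQ)) ih.1.le)
        _ = Q * (a' * T i) := by ring
        _ ≤ Q * T (i + 1) := by gcongr
  have hRT : Tendsto (fun i => R i / T i) atTop (𝓝 0) := by
    refine tendsto_zero_of_le_mul_add (div_nonneg hb ha'.le) ((div_lt_one ha').2 hba')
      (fun i => div_nonneg (hR i) (hinv i).1.le) (by simpa using hε.const_mul ((1 + Q) / a'))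
      fun i => ?_
    obtain ⟨hgrow, hRle⟩ := hstep i (hinv i).1 (hinv i).2
    have hTi := (hinv i).1
    calc R (i + 1) / T (i + 1) ≤ (b * R i + ε i * (1 + Q) * T i) / (a' * T i) :=
          div_le_div₀ (add_nonneg (mul_nonneg hb (hR i))
            (mul_nonneg (mul_nonneg (hε0 i) (by linarith)) hTi.le)) hRle (by positivity) hgrow
      _ = b / a' * (R i / T i) + (1 + Q) / a' * ε i := by field_simp
  exact squeeze_zero (fun i => div_nonneg (hR i) ((hinv i).1.trans_le (hTN i)).le)
    (fun i => div_le_div_of_nonneg_left (hR i) (hinv i).1 (hTN i)) hRT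

theorem tendsto_div_zero_or_tendsto_div_zero {a b : ℝ} (hb : 0 ≤ b) (hab : b < a)
    {T R N ε : ℕ → ℝ} (hT : ∀ i, 0 ≤ T i) (hR : ∀ i, 0 ≤ R i) (hN : ∀ i, 0 < N i)
    (hTN : ∀ i, T i ≤ N i) (hRN : ∀ i, R i ≤ N i) (hNTR : ∀ i, N i ≤ T i + R i)
    (hε0 : ∀ i, 0 ≤ ε i) (hε : Tendsto ε atTop (𝓝 0))
    (hTsucc : ∀ i, a * T i - ε i * N i ≤ T (i + 1))
    (hRsucc : ∀ i, R (i + 1) ≤ b * R i + ε i * N i) :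
    Tendsto (fun i => T i / N i) atTop (𝓝 0) ∨ Tendsto (fun i => R i / N i) atTop (𝓝 0) := by
  rw [or_iff_not_imp_left]
  intro hTN0
  obtain ⟨c, hc, hfreq⟩ : ∃ c > 0, ∃ᶠ i in atTop, c ≤ T i / N i := by
    by_contra! h
    exact hTN0 (tendsto_order.2 ⟨fun x hx => .of_forall fun i =>
      hx.trans_le (div_nonneg (hT i) (hN i).le), h⟩)
  have hsmall : ∀ᶠ i in atTop, ε i * (1 + c⁻¹) ≤ (a - b) / 2 := by
    have := hε.mul_const (1 + c⁻¹)
    rw [zero_mul] at this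
    exact this.eventually (ge_mem_nhds (by linarith))
  obtain ⟨I, hI⟩ := eventually_atTop.1 hsmall
  obtain ⟨i₀, hi₀, hci₀⟩ := frequently_atTop.1 hfreq I
  have hcN : c * N i₀ ≤ T i₀ := (le_div_iff₀ (hN i₀)).1 hci₀
  have hc1 : c ≤ 1 := hci₀.trans (div_le_one_of_le₀ (hTN i₀) (hN i₀).le)
  have hT₀ : 0 < T i₀ := (mul_pos hc (hN i₀)).trans_le hcN
  have hR₀ : R i₀ ≤ c⁻¹ * T i₀ := by
    rw [inv_mul_eq_div, le_div_iff₀' hc]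
    exact (mul_le_mul_of_nonneg_left (hRN i₀) hc.le).trans hcN
  have hεshift : Tendsto (fun j => ε (i₀ + j)) atTop (𝓝 0) := by
    simpa only [add_comm] using (tendsto_add_atTop_iff_nat i₀).2 hε
  have hratio := tendsto_div_zero_of_growth_gap (a := a) (a' := (a + b) / 2) (Q := c⁻¹)
    (T := fun j => T (i₀ + j)) (R := fun j => R (i₀ + j)) (N := fun j => N (i₀ + j))
    hb (by linarith) (one_le_inv₀ hc |>.2 hc1)
    (fun j => hR _) (fun j => hTN _) (fun j => hNTR _) (fun j => hε0 _) hεshift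
    (fun j => (hI _ (by omega)).trans (by linarith))
    (fun j => (hI _ (by omega)).trans (by linarith))
    (fun j => hTsucc _) (fun j => hRsucc _) (by simpa using hT₀) (by simpa using hR₀)
  exact (tendsto_add_atTop_iff_nat i₀).1 (by simpa only [add_comm] using hratio)

section Coordinates

variable {𝕜 ι : Type*} [RCLike 𝕜]

def coordScale (w : ι → ℝ) (y : EuclideanSpace 𝕜 ι) : EuclideanSpace 𝕜 ι :=
  WithLp.toLp 2 fun l => w l • y l

variable [DecidableEq ι]

def coordProj (S : Finset ι) (y : EuclideanSpace 𝕜 ι) : EuclideanSpace 𝕜 ι :=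
  WithLp.toLp 2 fun l => if l ∈ S then y l else 0

variable {S T U : Finset ι} {w : ι → ℝ} {c : ℝ}

@[simp]
theorem coordProj_empty (y : EuclideanSpace 𝕜 ι) : coordProj ∅ y = 0 := by
  ext l
  simp [coordProj]

theorem coordProj_sub (y z : EuclideanSpace 𝕜 ι) :
    coordProj S (y - z) = coordProj S y - coordProj S z := by
  ext l
  by_cases h : l ∈ S <;> simp [coordProj, h]

variable [Fintype ι]

@[simp]
theorem coordProj_univ (y : EuclideanSpace 𝕜 ι) : coordProj Finset.univ y = y := by
  ext l
  simp [coordProj]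

theorem norm_coordProj_sq (y : EuclideanSpace 𝕜 ι) :
    ‖coordProj S y‖ ^ 2 = ∑ l ∈ S, ‖y l‖ ^ 2 := by
  simp [EuclideanSpace.norm_sq_eq, coordProj, apply_ite (‖·‖ ^ 2), Finset.sum_ite_mem]

theorem norm_coordProj_le (y : EuclideanSpace 𝕜 ι) : ‖coordProj S y‖ ≤ ‖y‖ := by
  rw [← pow_le_pow_iff_left₀ (norm_nonneg _) (norm_nonneg _) two_ne_zero, norm_coordProj_sq,
    EuclideanSpace.norm_sq_eq]
  exact Finset.sum_le_sum_of_subset_of_nonneg (Finset.subset_univ S) fun l _ _ => by positivity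

theorem norm_coordProj_le_add (h : U ⊆ S ∪ T) (y : EuclideanSpace 𝕜 ι) :
    ‖coordProj U y‖ ≤ ‖coordProj S y‖ + ‖coordProj T y‖ := by
  rw [← pow_le_pow_iff_left₀ (norm_nonneg _) (by positivity) two_ne_zero]
  have hinter : 0 ≤ ∑ l ∈ S ∩ T, ‖y l‖ ^ 2 := Finset.sum_nonneg fun l _ => by positivity
  calc ‖coordProj U y‖ ^ 2 = ∑ l ∈ U, ‖y l‖ ^ 2 := norm_coordProj_sq y
    _ ≤ ∑ l ∈ S ∪ T, ‖y l‖ ^ 2 :=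
      Finset.sum_le_sum_of_subset_of_nonneg h fun l _ _ => by positivity
    _ ≤ ‖coordProj S y‖ ^ 2 + ‖coordProj T y‖ ^ 2 := by
      rw [norm_coordProj_sq, norm_coordProj_sq, ← Finset.sum_union_inter]
      linarith
    _ ≤ (‖coordProj S y‖ + ‖coordProj T y‖) ^ 2 := by
      nlinarith [norm_nonneg (coordProj S y), norm_nonneg (coordProj T y)]

theorem norm_coordProj_coordScale_sq (y : EuclideanSpace 𝕜 ι) :
    ‖coordProj S (coordScale w y)‖ ^ 2 = ∑ l ∈ S, w l ^ 2 * ‖y l‖ ^ 2 := by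
  simp [norm_coordProj_sq, coordScale, norm_smul, mul_pow]

theorem norm_coordProj_coordScale_le (hc : 0 ≤ c) (hS : ∀ l ∈ S, |w l| ≤ c)
    (y : EuclideanSpace 𝕜 ι) : ‖coordProj S (coordScale w y)‖ ≤ c * ‖coordProj S y‖ := by
  rw [← pow_le_pow_iff_left₀ (norm_nonneg _) (by positivity) two_ne_zero,
    norm_coordProj_coordScale_sq, mul_pow, norm_coordProj_sq, Finset.mul_sum]
  refine Finset.sum_le_sum fun l hl => mul_le_mul_of_nonneg_right ?_ (by positivity)
  simpa using pow_le_pow_left₀ (abs_nonneg _) (hS l hl) 2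

theorem mul_norm_coordProj_le_norm_coordProj_coordScale (hc : 0 ≤ c) (hS : ∀ l ∈ S, c ≤ |w l|)
    (y : EuclideanSpace 𝕜 ι) : c * ‖coordProj S y‖ ≤ ‖coordProj S (coordScale w y)‖ := by
  rw [← pow_le_pow_iff_left₀ (by positivity) (norm_nonneg _) two_ne_zero,
    norm_coordProj_coordScale_sq, mul_pow, norm_coordProj_sq, Finset.mul_sum]
  refine Finset.sum_le_sum fun l hl => mul_le_mul_of_nonneg_right ?_ (by positivity)
  simpa using pow_le_pow_left₀ hc (hS l hl) 2

theorem OrthonormalBasis.repr_apply_of_apply_eq_smul {V : Type*} [NormedAddCommGroup V]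
    [InnerProductSpace 𝕜 V] (b : OrthonormalBasis ι 𝕜 V) {E : V →ₗ[𝕜] V}
    (hE : ∀ l, E (b l) = (w l : 𝕜) • b l) (u : V) : b.repr (E u) = coordScale w (b.repr u) := by
  ext l
  conv_lhs => rw [← b.sum_repr u]
  simp [coordScale, hE, smul_smul, Pi.single_apply, RCLike.real_smul_eq_coe_mul, mul_comm]

end Coordinates

section ApproxOrbit

variable {𝕜 ι : Type*} [RCLike 𝕜] [Fintype ι]

def IsApproxOrbit (w : ι → ℝ) (ε : ℕ → ℝ) (y : ℕ → EuclideanSpace 𝕜 ι) : Prop :=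
  ∀ i, ‖y (i + 1) - coordScale w (y i)‖ ≤ ε i * ‖y i‖

theorem OrthonormalBasis.isApproxOrbit_repr {V : Type*} [NormedAddCommGroup V]
    [InnerProductSpace 𝕜 V] [DecidableEq ι] (b : OrthonormalBasis ι 𝕜 V) {w : ι → ℝ}
    {E : V →L[𝕜] V} (hE : ∀ l, E (b l) = (w l : 𝕜) • b l) {B : ℕ → V →L[𝕜] V} {x : ℕ → V}
    (hB : ∀ i, B i (x i) = x (i + 1)) :
    IsApproxOrbit w (fun i => ‖B i - E‖) (fun i => b.repr (x i)) := by
  intro i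
  rw [← b.repr_apply_of_apply_eq_smul (E := (E : V →ₗ[𝕜] V)) hE, ← map_sub, b.repr.norm_map,
    b.repr.norm_map, ← hB]
  exact (B i - E).le_opNorm (x i)

namespace IsApproxOrbit

variable {w : ι → ℝ} {ε : ℕ → ℝ} {y : ℕ → EuclideanSpace 𝕜 ι} {S : Finset ι}
  {c : ℝ}

theorem nonneg (h : IsApproxOrbit w ε y) (hy : ∀ i, y i ≠ 0) (i : ℕ) : 0 ≤ ε i :=
  nonneg_of_mul_nonneg_left ((norm_nonneg _).trans (h i)) (norm_pos_iff.2 (hy i))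

variable [DecidableEq ι]

theorem abs_norm_coordProj_succ_sub_le (h : IsApproxOrbit w ε y) (S : Finset ι) (i : ℕ) :
    |‖coordProj S (y (i + 1))‖ - ‖coordProj S (coordScale w (y i))‖| ≤ ε i * ‖y i‖ :=
  calc _ ≤ ‖coordProj S (y (i + 1)) - coordProj S (coordScale w (y i))‖ :=
        abs_norm_sub_norm_le _ _
    _ ≤ ‖y (i + 1) - coordScale w (y i)‖ := by rw [← coordProj_sub]; exact norm_coordProj_le _
    _ ≤ ε i * ‖y i‖ := h i

theorem norm_coordProj_succ_le (h : IsApproxOrbit w ε y) (hc : 0 ≤ c)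
    (hS : ∀ l ∈ S, |w l| ≤ c) (i : ℕ) :
    ‖coordProj S (y (i + 1))‖ ≤ c * ‖coordProj S (y i)‖ + ε i * ‖y i‖ := by
  linarith [(abs_le.1 (h.abs_norm_coordProj_succ_sub_le S i)).2,
    norm_coordProj_coordScale_le hc hS (y i)]

theorem le_norm_coordProj_succ (h : IsApproxOrbit w ε y) (hc : 0 ≤ c)
    (hS : ∀ l ∈ S, c ≤ |w l|) (i : ℕ) :
    c * ‖coordProj S (y i)‖ - ε i * ‖y i‖ ≤ ‖coordProj S (y (i + 1))‖ := by
  linarith [(abs_le.1 (h.abs_norm_coordProj_succ_sub_le S i)).1,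
    mul_norm_coordProj_le_norm_coordProj_coordScale hc hS (y i)]

theorem tendsto_norm_coordProj_lt_div (h : IsApproxOrbit w ε y) (hw : ∀ l, 0 ≤ w l)
    (hy : ∀ i, y i ≠ 0) (hε : Tendsto ε atTop (𝓝 0)) {s : ℝ}
    (hs : ¬ Tendsto (fun i => ‖coordProj {l | s ≤ w l} (y i)‖ / ‖y i‖) atTop (𝓝 0)) :
    Tendsto (fun i => ‖coordProj {l | w l < s} (y i)‖ / ‖y i‖) atTop (𝓝 0) := by
  rcases ({l | w l < s} : Finset ι).eq_empty_or_nonempty with hempty | hne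
  · simp [hempty]
  obtain ⟨l₁, hl₁, hmax⟩ := Finset.exists_max_image _ w hne
  have hl₁s : w l₁ < s := by simpa using hl₁
  refine (tendsto_div_zero_or_tendsto_div_zero (hw l₁) hl₁s (fun i => norm_nonneg _)
    (fun i => norm_nonneg _) (fun i => norm_pos_iff.2 (hy i)) (fun i => norm_coordProj_le _)
    (fun i => norm_coordProj_le _) (fun i => ?_) (h.nonneg hy) hε
    (h.le_norm_coordProj_succ ((hw l₁).trans hl₁s.le) fun l hl => ?_)
    (h.norm_coordProj_succ_le (hw l₁) fun l hl => ?_)).resolve_left hs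
  · calc ‖y i‖ = ‖coordProj Finset.univ (y i)‖ := by rw [coordProj_univ]
      _ ≤ _ := norm_coordProj_le_add (fun l _ => ?_) (y i)
    simpa only [Finset.mem_union, Finset.mem_filter, Finset.mem_univ, true_and] using
      le_or_gt s (w l)
  · exact (by simpa using hl : s ≤ w l).trans (le_abs_self _)
  · rw [abs_of_nonneg (hw l)]
    exact hmax l hl

theorem tendsto_norm_succ_div (h : IsApproxOrbit w ε y) (hy : ∀ i, y i ≠ 0)
    (hε : Tendsto ε atTop (𝓝 0)) {s : ℝ} (hs : 0 ≤ s)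
    (hlt : Tendsto (fun i => ‖coordProj {l | w l < s} (y i)‖ / ‖y i‖) atTop (𝓝 0))
    (hgt : Tendsto (fun i => ‖coordProj {l | s < w l} (y i)‖ / ‖y i‖) atTop (𝓝 0)) :
    Tendsto (fun i => ‖y (i + 1)‖ / ‖y i‖) atTop (𝓝 s) := by
  have hN : ∀ i, 0 < ‖y i‖ := fun i => norm_pos_iff.2 (hy i)
  set S : Finset ι := {l | w l = s}
  have hSw : ∀ l ∈ S, |w l| = s := fun l hl => by
    rw [(by simpa [S] using hl : w l = s), abs_of_nonneg hs]
  have hp : Tendsto (fun i => ‖coordProj S (y i)‖ / ‖y i‖) atTop (𝓝 1) := by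
    have hcover : ∀ i, ‖y i‖ ≤ ‖coordProj S (y i)‖ + (‖coordProj {l | w l < s} (y i)‖ +
        ‖coordProj {l | s < w l} (y i)‖) := fun i =>
      calc ‖y i‖ = ‖coordProj Finset.univ (y i)‖ := by rw [coordProj_univ]
        _ ≤ ‖coordProj S (y i)‖ + ‖coordProj {l | w l ≠ s} (y i)‖ :=
          norm_coordProj_le_add (fun l _ => by simpa [S] using em (w l = s)) _
        _ ≤ _ := add_le_add le_rfl (norm_coordProj_le_add (fun l hl => by
          simp only [Finset.mem_union, Finset.mem_filter, Finset.mem_univ, true_and] at hl ⊢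
          exact hl.lt_or_gt) _)
    refine tendsto_of_tendsto_of_tendsto_of_le_of_le (by simpa using (hlt.add hgt).const_sub 1)
      tendsto_const_nhds (fun i => ?_) fun i => div_le_one_of_le₀ (norm_coordProj_le _) (hN i).le
    rw [sub_le_iff_le_add, ← add_div, ← add_div, le_div_iff₀ (hN i), one_mul]
    exact hcover i
  have hq : Tendsto (fun i => ‖coordProj S (y (i + 1))‖ / ‖y i‖) atTop (𝓝 s) := by
    have hlow : ∀ i,
        s * (‖coordProj S (y i)‖ / ‖y i‖) - ε i ≤ ‖coordProj S (y (i + 1))‖ / ‖y i‖ := by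
      intro i
      rw [le_div_iff₀ (hN i), sub_mul, mul_assoc, div_mul_cancel₀ _ (hN i).ne']
      exact h.le_norm_coordProj_succ hs (fun l hl => (hSw l hl).ge) i
    have hup : ∀ i,
        ‖coordProj S (y (i + 1))‖ / ‖y i‖ ≤ s * (‖coordProj S (y i)‖ / ‖y i‖) + ε i := by
      intro i
      rw [div_le_iff₀ (hN i), add_mul, mul_assoc, div_mul_cancel₀ _ (hN i).ne']
      exact h.norm_coordProj_succ_le hs (fun l hl => (hSw l hl).le) i
    exact tendsto_of_tendsto_of_tendsto_of_le_of_le (by simpa using (hp.const_mul s).sub hε)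
      (by simpa using (hp.const_mul s).add hε) hlow hup
  have hp' := hp.comp (tendsto_add_atTop_nat 1)
  refine (by simpa using hq.div hp' one_ne_zero : Tendsto _ atTop (𝓝 s)).congr' ?_
  filter_upwards [hp'.eventually_ne one_ne_zero] with i hi
  have hi' : ‖coordProj S (y (i + 1))‖ ≠ 0 := fun h0 => hi (by simp [h0])
  simp only [Pi.div_apply, Function.comp_apply]
  field_simp

theorem exists_tendsto_norm_succ_div (h : IsApproxOrbit w ε y) (hw : ∀ l, 0 ≤ w l)
    (hy : ∀ i, y i ≠ 0) (hε : Tendsto ε atTop (𝓝 0)) :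
    ∃ l, Tendsto (fun i => ‖y (i + 1)‖ / ‖y i‖) atTop (𝓝 (w l)) := by
  have hι : Nonempty ι := by
    by_contra hι
    rw [not_nonempty_iff] at hι
    exact hy 0 (Subsingleton.elim _ _)
  set visible : Set ι :=
    {l | ¬ Tendsto (fun i => ‖coordProj {m | w l ≤ w m} (y i)‖ / ‖y i‖) atTop (𝓝 0)}
  have hvis : visible.Nonempty := by
    obtain ⟨l, -, hl⟩ := Finset.exists_min_image Finset.univ w Finset.univ_nonempty
    refine ⟨l, fun h0 => one_ne_zero (tendsto_nhds_unique tendsto_const_nhds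
      (h0.congr fun i => ?_))⟩
    have : ({m | w l ≤ w m} : Finset ι) = Finset.univ := by ext m; simpa using hl m
    rw [this, coordProj_univ, div_self (norm_ne_zero_iff.2 (hy i))]
  obtain ⟨l₀, hl₀, hmax⟩ := Set.exists_max_image visible w visible.toFinite hvis
  refine ⟨l₀, h.tendsto_norm_succ_div hy hε (hw l₀)
    (h.tendsto_norm_coordProj_lt_div hw hy hε hl₀) ?_⟩
  rcases ({m | w l₀ < w m} : Finset ι).eq_empty_or_nonempty with hempty | hne
  · simp [hempty]
  obtain ⟨l₁, hl₁, hmin⟩ := Finset.exists_min_image _ w hne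
  have hl₁ : w l₀ < w l₁ := by simpa using hl₁
  have hlevel : ({m | w l₀ < w m} : Finset ι) = ({m | w l₁ ≤ w m} : Finset ι) := by
    ext m
    simp only [Finset.mem_filter, Finset.mem_univ, true_and]
    exact ⟨fun hm => hmin m (by simpa using hm), hl₁.trans_le⟩
  rw [hlevel]
  by_contra h₁
  exact (hmax l₁ h₁).not_gt hl₁

end IsApproxOrbit

end ApproxOrbit

theorem stmt_3_general {V : Type*} [NormedAddCommGroup V] [InnerProductSpace ℂ V]
    [FiniteDimensional ℂ V]
    (Λ : V →L[ℂ] V) (hΛ : IsSelfAdjoint Λ)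
    (k : ℕ) (d : Fin k → ℝ)
    (heig : ∀ μ : ℂ, Module.End.HasEigenvalue (Λ : V →ₗ[ℂ] V) μ ↔ ∃ j, μ = (d j : ℂ))
    (A : ℕ → (V ≃L[ℂ] V))
    (hA : Tendsto (fun i => ((A (i+1) : V →L[ℂ] V).comp ((A i).symm : V →L[ℂ] V)))
      atTop (𝓝 (NormedSpace.exp Λ)))
    (v : V) (hv : v ≠ 0) :
    ∃ c : ℝ, (∃ j : Fin k, c = d j) ∧
      Tendsto (fun i => Real.log ‖A (i+1) v‖ - Real.log ‖A i v‖) atTop (𝓝 c) ∧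
      Tendsto (fun i : ℕ => (i : ℝ)⁻¹ * Real.log ‖A i v‖) atTop (𝓝 c) := by
  have hsym : (Λ : V →ₗ[ℂ] V).IsSymmetric :=
    ContinuousLinearMap.isSelfAdjoint_iff_isSymmetric.mp hΛ
  set b := hsym.eigenvectorBasis rfl
  set μ := hsym.eigenvalues rfl
  have hexp : ∀ l, NormedSpace.exp Λ (b l) = ((Real.exp (μ l) : ℝ) : ℂ) • b l := fun l => by
    rw [NormedSpace.exp_apply_of_apply_eq_smul (hsym.apply_eigenvectorBasis rfl l),
      ← Complex.exp_eq_exp_ℂ, Complex.ofReal_exp]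
    rfl
  have horbit := b.isApproxOrbit_repr (w := fun l => Real.exp (μ l)) hexp (x := fun i => A i v)
    (B := fun i => (A (i + 1) : V →L[ℂ] V).comp ((A i).symm : V →L[ℂ] V)) fun i => by simp
  obtain ⟨l, hl⟩ := horbit.exists_tendsto_norm_succ_div (fun l => (Real.exp_pos _).le)
    (fun i => by simpa using hv) (tendsto_iff_norm_sub_tendsto_zero.1 hA)
  simp only [LinearIsometryEquiv.norm_map] at hl
  have hlog : Tendsto (fun i => Real.log ‖A (i + 1) v‖ - Real.log ‖A i v‖) atTop (𝓝 (μ l)) := by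
    refine (by simpa using hl.log (Real.exp_pos _).ne' : Tendsto _ _ _).congr fun i => ?_
    exact Real.log_div (by simpa using hv) (by simpa using hv)
  obtain ⟨j, hj⟩ := (heig _).1 (hsym.hasEigenvalue_eigenvalues rfl l)
  exact ⟨μ l, ⟨j, Complex.ofReal_injective hj⟩, hlog, tendsto_inv_mul_of_tendsto_sub hlog⟩

/-- With `Λ`, `d`, `A` as in the setup, for every `v ≠ 0` the averaged logarithmic growth
rate `(1/i) · log ‖A i v‖` converges to `d(v) = lim (log ‖A (i+1) v‖ - log ‖A i v‖)`,
which is an eigenvalue of `Λ`. -/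
theorem stmt_3 {V : Type*} [NormedAddCommGroup V] [InnerProductSpace ℂ V]
    [FiniteDimensional ℂ V]
    (Λ : V →L[ℂ] V) (hΛ : IsSelfAdjoint Λ)
    (k : ℕ) (d : Fin k → ℝ) (hd : StrictAnti d)
    (heig : ∀ μ : ℂ, Module.End.HasEigenvalue (Λ : V →ₗ[ℂ] V) μ ↔ ∃ j, μ = (d j : ℂ))
    (A : ℕ → (V ≃L[ℂ] V))
    (hA : Tendsto (fun i => ((A (i+1) : V →L[ℂ] V).comp ((A i).symm : V →L[ℂ] V)))
      atTop (𝓝 (NormedSpace.exp Λ)))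
    (v : V) (hv : v ≠ 0) :
    ∃ c : ℝ, (∃ j : Fin k, c = d j) ∧
      Tendsto (fun i => Real.log ‖A (i+1) v‖ - Real.log ‖A i v‖) atTop (𝓝 c) ∧
      Tendsto (fun i : ℕ => (i : ℝ)⁻¹ * Real.log ‖A i v‖) atTop (𝓝 c) :=
  stmt_3_general Λ hΛ k d heig A hA v hv
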